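/- Level-1 structure for cubics: Let φ be a cubic polynomial over L with distinct critical points ω⁺, ω⁻ such that R_φ = diam K(φ), φ(ω⁺) lies in the level-0 ball D₀, and ω⁻ ∉ K(φ). Then: φ(ω⁻) ∉ D₀; there are exactly two level-1 balls, namely D₁(ω⁺) containing ω⁺ and D₁(γ⁺) containing the cocritical point γ⁺ (the point with φ(γ⁺) = φ(ω⁺), γ⁺ ≠ ω⁺); the map φ : D₁(ω⁺) → D₀ has degree 2 and φ : D₁(γ⁺) → D₀ has degree 1. -/

import Mathlib

open Polynomial Metric Set

/-- The filled Julia set: points whose forward orbit does not escape to infinity. -/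
def filledJulia {L : Type*} [NormedField L] (φ : Polynomial L) : Set L :=
  {z | ¬ Filter.Tendsto (fun n => ‖(fun w => φ.eval w)^[n] z‖) Filter.atTop Filter.atTop}

/-- The Julia set, the boundary of the filled Julia set. -/
def juliaSet {L : Type*} [NormedField L] (φ : Polynomial L) : Set L :=
  frontier (filledJulia φ)

/-- The standard escape radius `R_φ`. -/
noncomputable def escapeRadius {L : Type*} [NormedField L] (φ : Polynomial L) : ℝ :=
  max (‖φ.leadingCoeff⁻¹‖ ^ ((1 : ℝ) / ((φ.natDegree : ℝ) - 1)))
    (⨆ i : Finset.range φ.natDegree,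
      ‖φ.coeff i / φ.leadingCoeff‖ ^ ((1 : ℝ) / ((φ.natDegree : ℝ) - (i : ℕ))))

/-- A (closed) ball of positive radius. -/
def IsClosedBall {L : Type*} [NormedField L] (B : Set L) : Prop :=
  ∃ a : L, ∃ r : ℝ, 0 < r ∧ B = Metric.closedBall a r

/-- A dynamical ball of level `n`: a maximal closed ball inside `φ^{-n}(D₀)` where
`D₀ = B⁺_{R_φ}(0)` is the level-0 ball. -/
def IsDynBall {L : Type*} [NormedField L] (φ : Polynomial L) (n : ℕ) (B : Set L) : Prop :=
  IsClosedBall B ∧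
    B ⊆ (fun z => φ.eval z)^[n] ⁻¹' (Metric.closedBall 0 (escapeRadius φ)) ∧
    ∀ B', IsClosedBall B' → B ⊆ B' →
      B' ⊆ (fun z => φ.eval z)^[n] ⁻¹' (Metric.closedBall 0 (escapeRadius φ)) → B' = B

/-- An end: a nested sequence of dynamical balls, one of each level. -/
def IsEnd {L : Type*} [NormedField L] (φ : Polynomial L) (E : ℕ → Set L) : Prop :=
  ∀ n, IsDynBall φ n (E n) ∧ E (n + 1) ⊆ E n

/-- The local degree `deg_z(φ)`: the multiplicity of `z` as a root of `φ - φ(z)`. -/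
noncomputable def localDeg {K : Type*} [CommRing K] (φ : Polynomial K) (z : K) : ℕ :=
  Polynomial.rootMultiplicity z (φ - Polynomial.C (φ.eval z))

/-- `φ : B → B'` has a well-defined degree `d`: every point of `B'` has exactly `d`
preimages in `B` counted with local degree. -/
def HasDegOn {K : Type*} [CommRing K] (φ : Polynomial K) (B B' : Set K) (d : ℕ) : Prop :=
  1 ≤ d ∧ ∀ w ∈ B', (∑ᶠ z ∈ {z ∈ B | φ.eval z = w}, localDeg φ z) = d

/-- A set is infraconnected if it cannot be split by two disjoint closed balls. -/
def Infraconnected {L : Type*} [NormedField L] (X : Set L) : Prop :=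
  ∀ (a₀ : L) (r₀ : ℝ) (a₁ : L) (r₁ : ℝ),
    Disjoint (Metric.closedBall a₀ r₀) (Metric.closedBall a₁ r₁) →
    X ⊆ Metric.closedBall a₀ r₀ ∪ Metric.closedBall a₁ r₁ →
    X ⊆ Metric.closedBall a₀ r₀ ∨ X ⊆ Metric.closedBall a₁ r₁

/-- The infraconnected component of `z` in the filled Julia set: the intersection of all
dynamical balls containing `z`. -/
def infraComp {L : Type*} [NormedField L] (φ : Polynomial L) (z : L) : Set L :=
  {w | ∀ n B, IsDynBall φ n B → z ∈ B → w ∈ B}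

/-- The `p`-th iterate of `φ` as a polynomial. -/
noncomputable def polyIter {L : Type*} [CommRing L] (φ : Polynomial L) : ℕ → Polynomial L
  | 0 => Polynomial.X
  | n + 1 => φ.comp (polyIter φ n)

/-- The cubic family `φ_{α,β}(ζ) = ζ³ - 3α²ζ + β`. -/
noncomputable def cubic {L : Type*} [NormedField L] (α β : L) : Polynomial L :=
  Polynomial.X ^ 3 - Polynomial.C (3 * α ^ 2) * Polynomial.X + Polynomial.C β

/-!
Write `φ = a (z - ω⁺)² (z - γ⁺) + v` with `v = φ(ω⁺)`. Since `|2| = |3| = 1`, the other critical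
point satisfies `3ω⁻ = ω⁺ + 2γ⁺`, so it lies at distance `t = |ω⁺ - γ⁺|` from both `ω⁺` and `γ⁺`.
For `|v| ≤ R_φ`, a point `z` has `φ(z) ∈ D₀` iff `|a| |z - ω⁺|² |z - γ⁺| ≤ R_φ`.

If `|a| t³ ≤ R_φ`, this puts `K(φ)` inside a disc of radius `(R_φ/|a|)^{1/3}` about `ω⁺`, and
`diam K(φ) = R_φ` forces `|a| R_φ² = 1`; then `D₀` is forward invariant, so `ω⁻ ∈ D₀ ⊆ K(φ)`, which
is excluded. Hence `|a| t³ > R_φ`, so `|φ(ω⁻)| = |a| t³ > R_φ`, and `φ⁻¹(D₀)` is the union of the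
disjoint discs `D(ω⁺, r_ω)`, `D(γ⁺, r_γ)` with `|a| r_ω² t = |a| t² r_γ = R_φ`, both radii `< t`.
Density of the value group makes these the maximal discs in `φ⁻¹(D₀)`. For `|w| ≤ R_φ`, computing
`|φ(x) - w|` at a point with `r_ω < |x - ω⁺| = s < t` from the roots gives `|a| s^k t^(3-k)`, with
`k` the number of roots in `D(ω⁺, r_ω)`, and from the normal form gives `|a| s² t`; so `k = 2`.
-/

section Isosceles

variable {E : Type*} [SeminormedAddGroup E] [IsUltrametricDist E] {x y z : E}

lemma norm_sub_eq_of_norm_sub_lt (h : ‖z - x‖ < ‖x - y‖) : ‖z - y‖ = ‖x - y‖ := by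
  rw [IsUltrametricDist.norm_sub_eq_max_of_norm_sub_ne_norm_sub z x y h.ne, max_eq_right h.le]

lemma norm_sub_eq_of_lt_norm_sub (h : ‖x - y‖ < ‖z - x‖) : ‖z - y‖ = ‖z - x‖ := by
  rw [IsUltrametricDist.norm_sub_eq_max_of_norm_sub_ne_norm_sub z x y h.ne', max_eq_left h.le]

lemma norm_add_le_iff_of_norm_le {R : ℝ} (hy : ‖y‖ ≤ R) : ‖x + y‖ ≤ R ↔ ‖x‖ ≤ R := by
  constructor <;> intro h
  · simpa using (IsUltrametricDist.norm_add_le_max (x + y) (-y)).trans (max_le h (by simpa))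
  · exact (IsUltrametricDist.norm_add_le_max x y).trans (max_le h hy)

end Isosceles

lemma diam_pow_le_of_forall_dist_pow_le {X : Type*} [PseudoMetricSpace X] [IsUltrametricDist X]
    {S : Set X} {c : X} {C : ℝ} {n : ℕ} (hn : n ≠ 0) (hC : 0 ≤ C)
    (h : ∀ x ∈ S, dist x c ^ n ≤ C) : diam S ^ n ≤ C := by
  have hn' : (0 : ℝ) < n := by positivity
  have hdist : ∀ x ∈ S, dist x c ≤ C ^ (n : ℝ)⁻¹ := fun x hx =>
    (Real.le_rpow_inv_iff_of_pos dist_nonneg hC hn').mpr (by simpa using h x hx)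
  have hdiam : diam S ≤ C ^ (n : ℝ)⁻¹ := diam_le_of_forall_dist_le (by positivity)
    fun x hx y hy => (dist_triangle_max x c y).trans
      (max_le (hdist x hx) (dist_comm c y ▸ hdist y hy))
  calc diam S ^ n ≤ (C ^ (n : ℝ)⁻¹) ^ n := pow_le_pow_left₀ diam_nonneg hdiam n
    _ = C := Real.rpow_inv_natCast_pow hC hn

section EscapeRadius

variable {L : Type*} [NormedField L] {φ : L[X]}

lemma le_pow_of_rpow_inv_le {x R : ℝ} {n : ℕ} (hn : n ≠ 0) (hx : 0 ≤ x)
    (h : x ^ ((n : ℝ)⁻¹) ≤ R) : x ≤ R ^ n := by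
  rw [← Real.rpow_inv_natCast_pow hx hn]
  exact pow_le_pow_left₀ (by positivity) h n

lemma escapeRadius_pos (hφ : φ ≠ 0) : 0 < escapeRadius φ :=
  (Real.rpow_pos_of_pos (by simpa using hφ) _).trans_le (le_max_left _ _)

lemma one_le_norm_leadingCoeff_mul_escapeRadius_pow (hd : 2 ≤ φ.natDegree) :
    1 ≤ ‖φ.leadingCoeff‖ * escapeRadius φ ^ (φ.natDegree - 1) := by
  have ha : φ.leadingCoeff ≠ 0 := leadingCoeff_ne_zero.mpr (ne_zero_of_natDegree_gt hd)
  have hinv : ‖φ.leadingCoeff⁻¹‖ ≤ escapeRadius φ ^ (φ.natDegree - 1) := by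
    refine le_pow_of_rpow_inv_le (by omega) (norm_nonneg _) ((le_of_eq ?_).trans (le_max_left _ _))
    rw [Nat.cast_sub (by omega), one_div, Nat.cast_one]
  rw [norm_inv] at hinv
  calc (1 : ℝ) = ‖φ.leadingCoeff‖ * ‖φ.leadingCoeff‖⁻¹ := by field_simp
    _ ≤ _ := by gcongr

lemma norm_coeff_le_escapeRadius {i : ℕ} (hi : i ≤ φ.natDegree) :
    ‖φ.coeff i‖ ≤ ‖φ.leadingCoeff‖ * escapeRadius φ ^ (φ.natDegree - i) := by
  rcases hi.eq_or_lt with rfl | hi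
  · rw [Nat.sub_self, pow_zero, mul_one]; rfl
  have ha : φ.leadingCoeff ≠ 0 := leadingCoeff_ne_zero.mpr (ne_zero_of_natDegree_gt hi)
  have hsup : ‖φ.coeff i / φ.leadingCoeff‖ ^ ((1 : ℝ) / ((φ.natDegree : ℝ) - i))
      ≤ escapeRadius φ :=
    (le_ciSup (f := fun j : Finset.range φ.natDegree =>
      ‖φ.coeff j / φ.leadingCoeff‖ ^ ((1 : ℝ) / ((φ.natDegree : ℝ) - (j : ℕ))))
      (Set.finite_range _).bddAbove ⟨i, Finset.mem_range.mpr hi⟩).trans (le_max_right _ _)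
  have h : ‖φ.coeff i / φ.leadingCoeff‖ ≤ escapeRadius φ ^ (φ.natDegree - i) :=
    le_pow_of_rpow_inv_le (by omega) (norm_nonneg _) (by rwa [Nat.cast_sub hi.le, ← one_div])
  rw [norm_div, div_le_iff₀ (norm_pos_iff.mpr ha)] at h
  linarith

variable [IsUltrametricDist L]

lemma norm_eval_le_of_norm_le_escapeRadius {z : L} (hz : ‖z‖ ≤ escapeRadius φ) :
    ‖φ.eval z‖ ≤ ‖φ.leadingCoeff‖ * escapeRadius φ ^ φ.natDegree := by
  have hR : 0 ≤ escapeRadius φ := (norm_nonneg z).trans hz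
  rw [eval_eq_sum_range]
  refine IsUltrametricDist.norm_sum_le_of_forall_le_of_nonneg (by positivity) fun i hi => ?_
  have hi : i ≤ φ.natDegree := Nat.lt_succ_iff.mp (Finset.mem_range.mp hi)
  calc ‖φ.coeff i * z ^ i‖
      ≤ ‖φ.leadingCoeff‖ * escapeRadius φ ^ (φ.natDegree - i) * escapeRadius φ ^ i := by
        rw [norm_mul, norm_pow]
        exact mul_le_mul (norm_coeff_le_escapeRadius hi) (pow_le_pow_left₀ (norm_nonneg z) hz i)
          (by positivity) (by positivity)
    _ = ‖φ.leadingCoeff‖ * escapeRadius φ ^ φ.natDegree := by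
        rw [mul_assoc, ← pow_add, Nat.sub_add_cancel hi]

lemma norm_eval_eq_of_escapeRadius_lt (hd : 0 < φ.natDegree) {z : L}
    (hz : escapeRadius φ < ‖z‖) :
    ‖φ.eval z‖ = ‖φ.leadingCoeff‖ * ‖z‖ ^ φ.natDegree := by
  have ha : 0 < ‖φ.leadingCoeff‖ :=
    norm_pos_iff.mpr (leadingCoeff_ne_zero.mpr (ne_zero_of_natDegree_gt hd))
  have hR : 0 ≤ escapeRadius φ := (escapeRadius_pos (ne_zero_of_natDegree_gt hd)).le
  have hlower : ‖∑ i ∈ Finset.range φ.natDegree, φ.coeff i * z ^ i‖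
      < ‖φ.leadingCoeff * z ^ φ.natDegree‖ := by
    obtain ⟨i, hi, hle⟩ := IsUltrametricDist.exists_norm_finsetSum_le_of_nonempty
      (Finset.nonempty_range_iff.mpr hd.ne') fun i => φ.coeff i * z ^ i
    have hi : i < φ.natDegree := Finset.mem_range.mp hi
    refine hle.trans_lt ?_
    calc ‖φ.coeff i * z ^ i‖
        ≤ ‖φ.leadingCoeff‖ * escapeRadius φ ^ (φ.natDegree - i) * ‖z‖ ^ i := by
          rw [norm_mul, norm_pow]
          gcongr
          exact norm_coeff_le_escapeRadius hi.le
      _ < ‖φ.leadingCoeff‖ * ‖z‖ ^ (φ.natDegree - i) * ‖z‖ ^ i :=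
          mul_lt_mul_of_pos_right (mul_lt_mul_of_pos_left (pow_lt_pow_left₀ hz hR (by omega)) ha)
            (pow_pos (hR.trans_lt hz) i)
      _ = ‖φ.leadingCoeff * z ^ φ.natDegree‖ := by
          rw [mul_assoc, ← pow_add, Nat.sub_add_cancel hi.le, norm_mul, norm_pow]
  rw [eval_eq_sum_range, Finset.sum_range_succ, coeff_natDegree,
    IsUltrametricDist.norm_add_eq_max_of_norm_ne_norm hlower.ne, max_eq_right hlower.le,
    norm_mul, norm_pow]

lemma div_escapeRadius_mul_norm_le_norm_eval (hd : 2 ≤ φ.natDegree) {z : L}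
    (hz : escapeRadius φ < ‖z‖) :
    ‖z‖ / escapeRadius φ * ‖z‖ ≤ ‖φ.eval z‖ := by
  have hR := escapeRadius_pos (ne_zero_of_natDegree_gt hd)
  have hone := one_le_norm_leadingCoeff_mul_escapeRadius_pow hd
  rw [norm_eval_eq_of_escapeRadius_lt (by omega) hz]
  obtain ⟨k, hk⟩ := Nat.exists_eq_add_of_le' hd
  rw [hk, show k + 2 - 1 = k + 1 by omega] at hone
  rw [hk]
  calc ‖z‖ / escapeRadius φ * ‖z‖
      ≤ ‖φ.leadingCoeff‖ * escapeRadius φ ^ (k + 1) * (‖z‖ / escapeRadius φ * ‖z‖) :=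
        le_mul_of_one_le_left (by positivity) hone
    _ = ‖φ.leadingCoeff‖ * (escapeRadius φ ^ k * ‖z‖ ^ 2) := by
        field_simp; ring
    _ ≤ ‖φ.leadingCoeff‖ * (‖z‖ ^ k * ‖z‖ ^ 2) := by gcongr
    _ = ‖φ.leadingCoeff‖ * ‖z‖ ^ (k + 2) := by ring

lemma tendsto_norm_iterate_of_escapeRadius_lt (hd : 2 ≤ φ.natDegree) {z : L}
    (hz : escapeRadius φ < ‖z‖) :
    Filter.Tendsto (fun n => ‖(fun w => φ.eval w)^[n] z‖) Filter.atTop Filter.atTop := by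
  have hR := escapeRadius_pos (ne_zero_of_natDegree_gt hd)
  set c := ‖z‖ / escapeRadius φ
  have hc : 1 < c := (one_lt_div hR).mpr hz
  have horbit : ∀ n, c ^ n * ‖z‖ ≤ ‖(fun w => φ.eval w)^[n] z‖ := by
    intro n
    induction n with
    | zero => simp
    | succ n ih =>
      set y := (fun w => φ.eval w)^[n] z
      have hzy : ‖z‖ ≤ ‖y‖ := (le_mul_of_one_le_left (norm_nonneg z) (one_le_pow₀ hc.le)).trans ih
      calc c ^ (n + 1) * ‖z‖ = c * (c ^ n * ‖z‖) := by ring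
        _ ≤ ‖y‖ / escapeRadius φ * ‖y‖ :=
          mul_le_mul (div_le_div_of_nonneg_right hzy hR.le) ih (by positivity) (by positivity)
        _ ≤ ‖(fun w => φ.eval w)^[n + 1] z‖ := by
          rw [Function.iterate_succ_apply']
          exact div_escapeRadius_mul_norm_le_norm_eval hd (hz.trans_le hzy)
  exact Filter.tendsto_atTop_mono horbit
    ((tendsto_pow_atTop_atTop_of_one_lt hc).atTop_mul_const (hR.trans hz))

lemma norm_le_escapeRadius_of_norm_eval_le (hd : 2 ≤ φ.natDegree) {z : L}
    (h : ‖φ.eval z‖ ≤ escapeRadius φ) : ‖z‖ ≤ escapeRadius φ := by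
  by_contra! hz
  have hR := escapeRadius_pos (ne_zero_of_natDegree_gt hd)
  have hgrow : ‖z‖ ≤ ‖z‖ / escapeRadius φ * ‖z‖ :=
    le_mul_of_one_le_left (norm_nonneg z) ((one_le_div hR).mpr hz.le)
  linarith [div_escapeRadius_mul_norm_le_norm_eval hd hz]

lemma filledJulia_subset_closedBall (hd : 2 ≤ φ.natDegree) :
    filledJulia φ ⊆ closedBall 0 (escapeRadius φ) := fun z hz => by
  by_contra h
  rw [mem_closedBall_zero_iff, not_le] at h
  exact hz (tendsto_norm_iterate_of_escapeRadius_lt hd h)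

end EscapeRadius

section CubicNormalForm

variable {K : Type*} [Field K] {φ : K[X]} {a v ω γ z : K}

lemma eq_C_mul_X_sub_C_sq_mul_X_sub_C_add_C (h3 : φ.natDegree = 3)
    (hω : φ.derivative.eval ω = 0) (hγ : φ.eval γ = φ.eval ω) (hγω : γ ≠ ω) :
    φ = C φ.leadingCoeff * ((X - C ω) ^ 2 * (X - C γ)) + C (φ.eval ω) := by
  set ψ := φ - C (φ.eval ω)
  have hψdeg : ψ.natDegree = 3 := by rw [natDegree_sub_C, h3]
  have hψ : ψ ≠ 0 := by rintro h; rw [h, natDegree_zero] at hψdeg; omega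
  have hmonic : ((X - C ω) ^ 2 * (X - C γ)).Monic := ((monic_X_sub_C ω).pow 2).mul (monic_X_sub_C γ)
  have hdeg : ((X - C ω) ^ 2 * (X - C γ)).natDegree = 3 := by
    rw [natDegree_mul (pow_ne_zero 2 (X_sub_C_ne_zero ω)) (X_sub_C_ne_zero γ), natDegree_pow,
      natDegree_X_sub_C, natDegree_X_sub_C]
  have hsq : (X - C ω) ^ 2 ∣ ψ := (le_rootMultiplicity_iff hψ).mp <|
    (one_lt_rootMultiplicity_iff_isRoot hψ).mpr ⟨by simp [ψ], by simpa [ψ] using hω⟩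
  have hlin : X - C γ ∣ ψ := dvd_iff_isRoot.mpr (by simp [ψ, hγ])
  have hcop : IsCoprime ((X - C ω) ^ 2) (X - C γ) :=
    (isCoprime_X_sub_C_of_isUnit_sub (sub_ne_zero.mpr hγω.symm).isUnit).pow_left
  have hψeq := eq_mul_leadingCoeff_of_monic_of_dvd_of_natDegree_le hmonic (hcop.mul_dvd hsq hlin)
    (by rw [hdeg, hψdeg])
  have hlc : ψ.leadingCoeff = φ.leadingCoeff := by simp [ψ, leadingCoeff, h3]
  rw [hlc] at hψeq
  linear_combination hψeq

lemma natDegree_eq_three_and_leadingCoeff_eq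
    (hφ : φ = C a * ((X - C ω) ^ 2 * (X - C γ)) + C v) (ha : a ≠ 0) :
    φ.natDegree = 3 ∧ φ.leadingCoeff = a := by
  have hdeg : (C a * ((X - C ω) ^ 2 * (X - C γ))).degree = 3 := by compute_degree!
  subst hφ
  refine ⟨by rw [natDegree_add_C, natDegree_eq_of_degree_eq_some hdeg], ?_⟩
  rw [leadingCoeff_add_of_degree_lt' (hdeg ▸ degree_C_le.trans_lt (by decide))]
  simp [leadingCoeff_mul]

lemma sub_C_eq_C_mul_add_C (hφ : φ = C a * ((X - C ω) ^ 2 * (X - C γ)) + C v) (w : K) :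
    φ - C w = C a * ((X - C ω) ^ 2 * (X - C γ)) + C (v - w) := by
  rw [hφ, C_sub]; ring

lemma three_mul_eq_of_derivative_eval_eq_zero
    (hφ : φ = C a * ((X - C ω) ^ 2 * (X - C γ)) + C v) (ha : a ≠ 0)
    (hz : φ.derivative.eval z = 0) (hzω : z ≠ ω) : 3 * z = ω + 2 * γ := by
  have hder : φ.derivative.eval z = a * ((z - ω) * (3 * z - ω - 2 * γ)) := by
    rw [hφ]
    simp only [derivative_add, derivative_mul, derivative_C, derivative_pow, derivative_sub,
      derivative_X, eval_add, eval_mul, eval_sub, eval_pow, eval_C, eval_X, eval_one, eval_zero]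
    push_cast
    ring
  rw [hz, eq_comm, mul_eq_zero, mul_eq_zero, sub_eq_zero, sub_eq_zero] at hder
  rcases hder with h | h | h
  exacts [absurd h ha, absurd h hzω, by linear_combination h]

end CubicNormalForm

lemma norm_sub_eq_of_three_mul_eq {L : Type*} [NormedField L] {ω γ z : L}
    (h2 : ‖(2 : L)‖ = 1) (h3 : ‖(3 : L)‖ = 1) (hz : 3 * z = ω + 2 * γ) :
    ‖z - ω‖ = ‖ω - γ‖ ∧ ‖z - γ‖ = ‖ω - γ‖ := by
  have hω : (3 : L) * (z - ω) = -(2 * (ω - γ)) := by linear_combination hz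
  have hγ : (3 : L) * (z - γ) = ω - γ := by linear_combination hz
  constructor
  · simpa [h2, h3] using congrArg norm hω
  · simpa [h3] using congrArg norm hγ

section FilledJulia

variable {L : Type*} [NormedField L] {φ : L[X]}

lemma eval_mem_filledJulia {z : L} (hz : z ∈ filledJulia φ) : φ.eval z ∈ filledJulia φ :=
  fun h => hz <| (Filter.tendsto_add_atTop_iff_nat 1).mp <| by
    simpa only [Function.iterate_succ_apply] using h

lemma closedBall_subset_filledJulia {ρ : ℝ}
    (h : MapsTo (fun z => φ.eval z) (closedBall 0 ρ) (closedBall 0 ρ)) :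
    closedBall 0 ρ ⊆ filledJulia φ := fun z hz htend => by
  obtain ⟨n, hn⟩ := (htend.eventually_gt_atTop ρ).exists
  exact hn.not_ge (mem_closedBall_zero_iff.mp (h.iterate n hz))

end FilledJulia

lemma lt_of_mul_sq_mul_eq {A r t R : ℝ} (hA : 0 ≤ A) (ht : 0 ≤ t)
    (h : A * (r ^ 2 * t) = R) (hR : R < A * t ^ 3) : r < t := by
  by_contra! htr
  have : A * t ^ 3 ≤ A * (r ^ 2 * t) := by
    rw [pow_succ]; gcongr
  linarith

lemma lt_of_mul_sq_mul_eq' {A r t R : ℝ} (hA : 0 ≤ A)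
    (h : A * (t ^ 2 * r) = R) (hR : R < A * t ^ 3) : r < t := by
  by_contra! htr
  have : A * t ^ 3 ≤ A * (t ^ 2 * r) := by
    rw [pow_succ]; gcongr
  linarith

section CubicGeometry

variable {L : Type*} [NormedField L] [IsUltrametricDist L] {φ : L[X]} {a v ω γ w z : L}
  {R rω rγ : ℝ}

lemma norm_eval_le_iff (hφ : φ = C a * ((X - C ω) ^ 2 * (X - C γ)) + C v) (hv : ‖v‖ ≤ R) :
    ‖φ.eval z‖ ≤ R ↔ ‖a‖ * (‖z - ω‖ ^ 2 * ‖z - γ‖) ≤ R := by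
  rw [hφ]
  simp only [eval_add, eval_mul, eval_pow, eval_sub, eval_C, eval_X]
  rw [norm_add_le_iff_of_norm_le hv, norm_mul, norm_mul, norm_pow]

lemma norm_mul_norm_sub_pow_le (hφ : φ = C a * ((X - C ω) ^ 2 * (X - C γ)) + C v)
    (hv : ‖v‖ ≤ R) (hR : ‖a‖ * ‖ω - γ‖ ^ 3 ≤ R) (hz : ‖φ.eval z‖ ≤ R) :
    ‖a‖ * ‖z - ω‖ ^ 3 ≤ R := by
  rw [norm_eval_le_iff hφ hv] at hz
  rcases le_or_gt ‖z - ω‖ ‖ω - γ‖ with h | h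
  · exact le_trans (by gcongr) hR
  · rwa [norm_sub_eq_of_lt_norm_sub h, ← pow_succ] at hz

lemma preimage_eval_closedBall (hφ : φ = C a * ((X - C ω) ^ 2 * (X - C γ)) + C v)
    (hv : ‖v‖ ≤ R) (hR : R < ‖a‖ * ‖ω - γ‖ ^ 3) (hrω₀ : 0 ≤ rω)
    (hrω : ‖a‖ * (rω ^ 2 * ‖ω - γ‖) = R) (hrγ : ‖a‖ * (‖ω - γ‖ ^ 2 * rγ) = R) :
    (fun z => φ.eval z) ⁻¹' closedBall 0 R = closedBall ω rω ∪ closedBall γ rγ := by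
  have hrωt : rω < ‖ω - γ‖ := lt_of_mul_sq_mul_eq (norm_nonneg a) (norm_nonneg _) hrω hR
  have hrγt : rγ < ‖ω - γ‖ := lt_of_mul_sq_mul_eq' (norm_nonneg a) hrγ hR
  have ha : 0 < ‖a‖ := norm_pos_iff.mpr (by rintro rfl; simp at hR hrω; linarith)
  have ht : 0 < ‖ω - γ‖ := hrω₀.trans_lt hrωt
  ext z
  simp only [mem_preimage, mem_closedBall_zero_iff]
  rw [norm_eval_le_iff hφ hv]
  simp only [mem_union, mem_closedBall, dist_eq_norm]
  rcases lt_trichotomy ‖z - ω‖ ‖ω - γ‖ with h | h | h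
  · rw [norm_sub_eq_of_norm_sub_lt h, ← hrω, or_iff_left hrγt.not_ge, mul_le_mul_iff_right₀ ha,
      mul_le_mul_iff_left₀ ht, pow_le_pow_iff_left₀ (norm_nonneg _) hrω₀ two_ne_zero]
  · rw [h, ← hrγ, or_iff_right hrωt.not_ge, mul_le_mul_iff_right₀ ha,
      mul_le_mul_iff_right₀ (by positivity)]
  · rw [norm_sub_eq_of_lt_norm_sub h]
    refine iff_of_false (fun hle => ?_) ?_
    · have : ‖a‖ * ‖ω - γ‖ ^ 3 < ‖a‖ * ‖z - ω‖ ^ 3 := by gcongr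
      linarith
    · rintro (h' | h') <;> linarith

lemma mem_union_of_mem_roots_sub_C (hφ : φ = C a * ((X - C ω) ^ 2 * (X - C γ)) + C v)
    (hv : ‖v‖ ≤ R) (hR : R < ‖a‖ * ‖ω - γ‖ ^ 3) (hrω₀ : 0 ≤ rω)
    (hrω : ‖a‖ * (rω ^ 2 * ‖ω - γ‖) = R) (hrγ : ‖a‖ * (‖ω - γ‖ ^ 2 * rγ) = R) (hw : ‖w‖ ≤ R)
    (hz : z ∈ (φ - C w).roots) : z ∈ closedBall ω rω ∪ closedBall γ rγ := by
  have hpz : φ.eval z = w := by simpa [sub_eq_zero] using isRoot_of_mem_roots hz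
  rw [← preimage_eval_closedBall hφ hv hR hrω₀ hrω hrγ, mem_preimage, hpz]
  exact mem_closedBall_zero_iff.mpr hw

lemma norm_eval_sub_C_add_eq (hφ : φ = C a * ((X - C ω) ^ 2 * (X - C γ)) + C v) (ha : a ≠ 0)
    (hv : ‖v‖ ≤ R) (hrω₀ : 0 ≤ rω) (hrω : ‖a‖ * (rω ^ 2 * ‖ω - γ‖) = R) (hw : ‖w‖ ≤ R)
    {e : L} (he₁ : rω < ‖e‖) (he₂ : ‖e‖ < ‖ω - γ‖) :
    ‖(φ - C w).eval (ω + e)‖ = ‖a‖ * (‖e‖ ^ 2 * ‖ω - γ‖) := by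
  have hxγ : ‖ω + e - γ‖ = ‖ω - γ‖ := norm_sub_eq_of_norm_sub_lt (by rwa [add_sub_cancel_left])
  have hvw : ‖v - w‖ ≤ R := by
    rw [sub_eq_add_neg]
    exact (IsUltrametricDist.norm_add_le_max v (-w)).trans (max_le hv (by rwa [norm_neg]))
  have hmain : ‖a * ((ω + e - ω) ^ 2 * (ω + e - γ))‖ = ‖a‖ * (‖e‖ ^ 2 * ‖ω - γ‖) := by
    rw [norm_mul, norm_mul, norm_pow, add_sub_cancel_left, hxγ]
  have hlt : ‖v - w‖ < ‖a * ((ω + e - ω) ^ 2 * (ω + e - γ))‖ := by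
    have : 0 < ‖ω - γ‖ := hrω₀.trans_lt (he₁.trans he₂)
    have : 0 < ‖a‖ := norm_pos_iff.mpr ha
    rw [hmain]
    exact (hrω ▸ hvw).trans_lt (by gcongr)
  have heval : (φ - C w).eval (ω + e) = a * ((ω + e - ω) ^ 2 * (ω + e - γ)) + (v - w) := by
    rw [hφ]
    simp only [eval_sub, eval_add, eval_mul, eval_pow, eval_C, eval_X]
    ring
  rw [heval, IsUltrametricDist.norm_add_eq_max_of_norm_ne_norm hlt.ne', max_eq_left hlt.le, hmain]

end CubicGeometry

section SmallCriticalDistance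

variable {L : Type*} [NormedField L] [IsUltrametricDist L] {φ : L[X]} {v ω γ : L}

lemma norm_leadingCoeff_mul_escapeRadius_sq_eq_one (h3 : φ.natDegree = 3)
    (hφ : φ = C φ.leadingCoeff * ((X - C ω) ^ 2 * (X - C γ)) + C v) (hv : ‖v‖ ≤ escapeRadius φ)
    (hdiam : escapeRadius φ = diam (filledJulia φ))
    (hsmall : ‖φ.leadingCoeff‖ * ‖ω - γ‖ ^ 3 ≤ escapeRadius φ) :
    ‖φ.leadingCoeff‖ * escapeRadius φ ^ 2 = 1 := by
  have hd : 2 ≤ φ.natDegree := by omega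
  have hR := escapeRadius_pos (ne_zero_of_natDegree_gt hd)
  have ha : 0 < ‖φ.leadingCoeff‖ :=
    norm_pos_iff.mpr (leadingCoeff_ne_zero.mpr (ne_zero_of_natDegree_gt hd))
  have hK : ∀ z ∈ filledJulia φ, dist z ω ^ 3 ≤ escapeRadius φ / ‖φ.leadingCoeff‖ :=
    fun z hz => by
      rw [dist_eq_norm, le_div_iff₀' ha]
      exact norm_mul_norm_sub_pow_le hφ hv hsmall <| mem_closedBall_zero_iff.mp <|
        filledJulia_subset_closedBall hd (eval_mem_filledJulia hz)
  have hcube : escapeRadius φ ^ 3 * ‖φ.leadingCoeff‖ ≤ escapeRadius φ := by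
    rw [← le_div_iff₀ ha]
    calc escapeRadius φ ^ 3 = diam (filledJulia φ) ^ 3 := by rw [← hdiam]
      _ ≤ _ := diam_pow_le_of_forall_dist_pow_le three_ne_zero (by positivity) hK
  have hone := one_le_norm_leadingCoeff_mul_escapeRadius_pow hd
  rw [h3] at hone
  refine le_antisymm ?_ hone
  nlinarith

lemma escapeRadius_lt_of_diam_filledJulia_eq (h3 : φ.natDegree = 3)
    (hφ : φ = C φ.leadingCoeff * ((X - C ω) ^ 2 * (X - C γ)) + C v) (hv : ‖v‖ ≤ escapeRadius φ)
    (hdiam : escapeRadius φ = diam (filledJulia φ)) {ω' : L} (hω' : ‖ω' - ω‖ ≤ ‖ω - γ‖)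
    (hesc : ω' ∉ filledJulia φ) :
    escapeRadius φ < ‖φ.leadingCoeff‖ * ‖ω - γ‖ ^ 3 := by
  by_contra! hsmall
  have hd : 2 ≤ φ.natDegree := by omega
  have hR := escapeRadius_pos (ne_zero_of_natDegree_gt hd)
  have haR := norm_leadingCoeff_mul_escapeRadius_sq_eq_one h3 hφ hv hdiam hsmall
  have hmaps : MapsTo (fun z => φ.eval z) (closedBall 0 (escapeRadius φ))
      (closedBall 0 (escapeRadius φ)) := fun z hz => by
    rw [mem_closedBall_zero_iff] at hz ⊢
    calc ‖φ.eval z‖ ≤ ‖φ.leadingCoeff‖ * escapeRadius φ ^ φ.natDegree :=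
          norm_eval_le_of_norm_le_escapeRadius hz
      _ = escapeRadius φ := by rw [h3, pow_succ, ← mul_assoc, haR, one_mul]
  have hω : ‖ω‖ ≤ escapeRadius φ := norm_le_escapeRadius_of_norm_eval_le hd <| by
    rwa [show φ.eval ω = v by rw [hφ]; simp]
  have ha : 0 < ‖φ.leadingCoeff‖ :=
    norm_pos_iff.mpr (leadingCoeff_ne_zero.mpr (ne_zero_of_natDegree_gt hd))
  have ht : ‖ω - γ‖ ≤ escapeRadius φ := by
    refine le_of_pow_le_pow_left₀ three_ne_zero hR.le ((mul_le_mul_iff_right₀ ha).mp ?_)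
    calc ‖φ.leadingCoeff‖ * ‖ω - γ‖ ^ 3 ≤ escapeRadius φ := hsmall
      _ = ‖φ.leadingCoeff‖ * escapeRadius φ ^ 3 := by rw [pow_succ, ← mul_assoc, haR, one_mul]
  refine hesc (closedBall_subset_filledJulia hmaps (mem_closedBall_zero_iff.mpr ?_))
  calc ‖ω'‖ = ‖(ω' - ω) + ω‖ := by rw [sub_add_cancel]
    _ ≤ escapeRadius φ := (IsUltrametricDist.norm_add_le_max _ _).trans
      (max_le (hω'.trans ht) hω)

end SmallCriticalDistance

section MaximalBalls

variable {L : Type*} [NormedField L]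

def IsMaxClosedBallIn (S B : Set L) : Prop :=
  IsClosedBall B ∧ B ⊆ S ∧ ∀ B', IsClosedBall B' → B ⊆ B' → B' ⊆ S → B' = B

lemma isDynBall_iff_isMaxClosedBallIn {φ : L[X]} {n : ℕ} {B : Set L} :
    IsDynBall φ n B ↔
      IsMaxClosedBallIn ((fun z => φ.eval z)^[n] ⁻¹' closedBall 0 (escapeRadius φ)) B :=
  Iff.rfl

variable [IsUltrametricDist L] {c₁ c₂ b : L} {r₁ r₂ r : ℝ}

lemma closedBall_subset_of_subset_union (hr₁ : r₁ < ‖c₁ - c₂‖) (hr₂ : r₂ < ‖c₁ - c₂‖)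
    (hgap : ∃ e : L, r₁ < ‖e‖ ∧ ‖e‖ < ‖c₁ - c₂‖) (hb : b ∈ closedBall c₁ r₁)
    (h : closedBall b r ⊆ closedBall c₁ r₁ ∪ closedBall c₂ r₂) :
    closedBall b r ⊆ closedBall c₁ r₁ := by
  have hfar : ∀ y, ‖y - c₁‖ < ‖c₁ - c₂‖ → y ∉ closedBall c₂ r₂ := fun y hy hy₂ => by
    rw [mem_closedBall, dist_eq_norm, norm_sub_eq_of_norm_sub_lt hy] at hy₂
    linarith
  rw [mem_closedBall, dist_eq_norm] at hb
  have hrt : r < ‖c₁ - c₂‖ := by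
    by_contra! hr
    obtain ⟨e, he₁, he₂⟩ := hgap
    have hbe : ‖b + e - c₁‖ = ‖e‖ := by
      rw [norm_sub_eq_of_lt_norm_sub (x := b) (by rw [add_sub_cancel_left]; linarith),
        add_sub_cancel_left]
    have hmem : b + e ∈ closedBall b r := by
      rw [mem_closedBall, dist_eq_norm, add_sub_cancel_left]; linarith
    rcases h hmem with h₁ | h₂
    · rw [mem_closedBall, dist_eq_norm, hbe] at h₁; linarith
    · exact hfar _ (hbe ▸ he₂) h₂
  intro y hy
  refine (h hy).resolve_right (hfar y ?_)
  rw [mem_closedBall, dist_eq_norm] at hy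
  calc ‖y - c₁‖ = ‖(y - b) + (b - c₁)‖ := by rw [sub_add_sub_cancel]
    _ ≤ max ‖y - b‖ ‖b - c₁‖ := IsUltrametricDist.norm_add_le_max _ _
    _ < ‖c₁ - c₂‖ := max_lt (by linarith) (by linarith)

lemma isMaxClosedBallIn_union_left (hr₁₀ : 0 < r₁) (hr₁ : r₁ < ‖c₁ - c₂‖)
    (hr₂ : r₂ < ‖c₁ - c₂‖) (hgap : ∃ e : L, r₁ < ‖e‖ ∧ ‖e‖ < ‖c₁ - c₂‖) :
    IsMaxClosedBallIn (closedBall c₁ r₁ ∪ closedBall c₂ r₂) (closedBall c₁ r₁) := by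
  refine ⟨⟨c₁, r₁, hr₁₀, rfl⟩, subset_union_left, ?_⟩
  rintro _ ⟨b, r, -, rfl⟩ hsub hU
  have hc : c₁ ∈ closedBall b r := hsub (mem_closedBall_self hr₁₀.le)
  rw [IsUltrametricDist.closedBall_eq_of_mem hc] at hU hsub ⊢
  exact (closedBall_subset_of_subset_union hr₁ hr₂ hgap (mem_closedBall_self hr₁₀.le) hU).antisymm
    hsub

lemma isMaxClosedBallIn_union_iff (hr₁₀ : 0 < r₁) (hr₂₀ : 0 < r₂) (hr₁ : r₁ < ‖c₁ - c₂‖)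
    (hr₂ : r₂ < ‖c₁ - c₂‖) (hgap₁ : ∃ e : L, r₁ < ‖e‖ ∧ ‖e‖ < ‖c₁ - c₂‖)
    (hgap₂ : ∃ e : L, r₂ < ‖e‖ ∧ ‖e‖ < ‖c₁ - c₂‖) {B : Set L} :
    IsMaxClosedBallIn (closedBall c₁ r₁ ∪ closedBall c₂ r₂) B ↔
      B = closedBall c₁ r₁ ∨ B = closedBall c₂ r₂ := by
  have h₂₁ : ‖c₂ - c₁‖ = ‖c₁ - c₂‖ := norm_sub_rev c₂ c₁
  constructor
  · rintro ⟨⟨b, r, hr, rfl⟩, hU, hmax⟩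
    rcases hU (mem_closedBall_self hr.le) with hb | hb
    · exact .inl (hmax _ ⟨c₁, r₁, hr₁₀, rfl⟩
        (closedBall_subset_of_subset_union hr₁ hr₂ hgap₁ hb hU) subset_union_left).symm
    · exact .inr (hmax _ ⟨c₂, r₂, hr₂₀, rfl⟩ (closedBall_subset_of_subset_union (h₂₁ ▸ hr₂)
        (h₂₁ ▸ hr₁) (h₂₁ ▸ hgap₂) hb (union_comm _ _ ▸ hU)) subset_union_right).symm
  · rintro (rfl | rfl)
    · exact isMaxClosedBallIn_union_left hr₁₀ hr₁ hr₂ hgap₁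
    · exact union_comm _ _ ▸
        isMaxClosedBallIn_union_left hr₂₀ (h₂₁ ▸ hr₂) (h₂₁ ▸ hr₁) (h₂₁ ▸ hgap₂)

end MaximalBalls

lemma isDynBall_one_iff {L : Type*} [NormedField L] [IsUltrametricDist L] {φ : L[X]}
    {a v ω γ : L} {rω rγ : ℝ} (hφ : φ = C a * ((X - C ω) ^ 2 * (X - C γ)) + C v)
    (hv : ‖v‖ ≤ escapeRadius φ) (hR : escapeRadius φ < ‖a‖ * ‖ω - γ‖ ^ 3) (hrω₀ : 0 < rω)
    (hrγ₀ : 0 < rγ) (hrω : ‖a‖ * (rω ^ 2 * ‖ω - γ‖) = escapeRadius φ)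
    (hrγ : ‖a‖ * (‖ω - γ‖ ^ 2 * rγ) = escapeRadius φ)
    (hgapω : ∃ e : L, rω < ‖e‖ ∧ ‖e‖ < ‖ω - γ‖) (hgapγ : ∃ e : L, rγ < ‖e‖ ∧ ‖e‖ < ‖ω - γ‖)
    {B : Set L} : IsDynBall φ 1 B ↔ B = closedBall ω rω ∨ B = closedBall γ rγ := by
  rw [isDynBall_iff_isMaxClosedBallIn, Function.iterate_one,
    preimage_eval_closedBall hφ hv hR hrω₀.le hrω hrγ]
  exact isMaxClosedBallIn_union_iff hrω₀ hrγ₀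
    (lt_of_mul_sq_mul_eq (norm_nonneg a) (norm_nonneg _) hrω hR)
    (lt_of_mul_sq_mul_eq' (norm_nonneg a) hrγ hR) hgapω hgapγ

lemma finsum_localDeg_eq_card_filter_roots {K : Type*} [Field K] {φ : K[X]} {w : K}
    (hφ : φ - C w ≠ 0) (B : Set K) [DecidablePred (· ∈ B)] :
    ∑ᶠ z ∈ {z ∈ B | φ.eval z = w}, localDeg φ z = ((φ - C w).roots.filter (· ∈ B)).card := by
  classical
  have hset : {z ∈ B | φ.eval z = w} = ↑((φ - C w).roots.filter (· ∈ B)).toFinset := by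
    ext z
    simp [mem_roots hφ, sub_eq_zero, and_comm]
  rw [hset, finsum_mem_coe_finset, ← Multiset.toFinset_sum_count_eq]
  refine Finset.sum_congr rfl fun z hz => ?_
  obtain ⟨hroot, hzB⟩ := Multiset.mem_filter.mp (Multiset.mem_toFinset.mp hz)
  have hwz : φ.eval z = w := by simpa [sub_eq_zero] using (mem_roots hφ).mp hroot
  rw [Multiset.count_filter_of_pos hzB, count_roots, localDeg, hwz]

section NormOfSplitPolynomial

variable {L : Type*} [NormedField L] [IsAlgClosed L]

lemma norm_eval_eq_prod_roots (p : L[X]) (x : L) :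
    ‖p.eval x‖ = ‖p.leadingCoeff‖ * (p.roots.map fun z => ‖x - z‖).prod := by
  rw [(IsAlgClosed.splits p).eval_eq_prod_roots, norm_mul]
  congr 1
  simpa [Multiset.map_map] using map_multiset_prod (normHom : L →*₀ ℝ) (p.roots.map (x - ·))

lemma norm_eval_eq_of_forall_mem_roots (p : L[X]) (P : L → Prop) [DecidablePred P] {x : L}
    {s t : ℝ} (hs : ∀ z ∈ p.roots, P z → ‖x - z‖ = s) (ht : ∀ z ∈ p.roots, ¬P z → ‖x - z‖ = t) :
    ‖p.eval x‖ =
      ‖p.leadingCoeff‖ * (s ^ (p.roots.filter P).card * t ^ (p.roots.filter (¬P ·)).card) := by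
  have hsplit : (p.roots.map fun z => ‖x - z‖).prod =
      ((p.roots.filter P).map fun z => ‖x - z‖).prod *
        ((p.roots.filter (¬P ·)).map fun z => ‖x - z‖).prod := by
    rw [← Multiset.prod_add, ← Multiset.map_add, Multiset.filter_add_not]
  rw [norm_eval_eq_prod_roots, hsplit,
    Multiset.map_congr rfl fun z hz => hs z (Multiset.mem_filter.mp hz).1
      (Multiset.mem_filter.mp hz).2,
    Multiset.map_congr rfl fun z hz => ht z (Multiset.mem_filter.mp hz).1
      (Multiset.mem_filter.mp hz).2]
  simp

end NormOfSplitPolynomial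

lemma eq_of_pow_mul_pow_eq {s t : ℝ} (hs : 0 < s) (hst : s < t) {k l m n : ℕ}
    (hkl : k + l = m + n) (h : s ^ k * t ^ l = s ^ m * t ^ n) : k = m := by
  have ht : 0 < t := hs.trans hst
  have key : ∀ i j, s ^ i * t ^ j = (s / t) ^ i * t ^ (i + j) := fun i j => by
    rw [div_pow, pow_add]; field_simp
  rw [key, key, hkl, mul_left_inj' (pow_pos ht _).ne'] at h
  exact (pow_right_strictAnti₀ (div_pos hs ht) ((div_lt_one ht).mpr hst)).injective h

section CubicRootCount

variable {L : Type*} [NormedField L] [IsUltrametricDist L] [IsAlgClosed L] {φ : L[X]}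
  {a v ω γ w : L} {R rω rγ : ℝ}

lemma card_filter_roots_mem_closedBall (hφ : φ = C a * ((X - C ω) ^ 2 * (X - C γ)) + C v)
    (hv : ‖v‖ ≤ R) (hR : R < ‖a‖ * ‖ω - γ‖ ^ 3) (hrω₀ : 0 ≤ rω)
    (hrω : ‖a‖ * (rω ^ 2 * ‖ω - γ‖) = R) (hrγ : ‖a‖ * (‖ω - γ‖ ^ 2 * rγ) = R)
    (hgap : ∃ e : L, rω < ‖e‖ ∧ ‖e‖ < ‖ω - γ‖) (hw : ‖w‖ ≤ R)
    [DecidablePred (· ∈ closedBall ω rω)] [DecidablePred (· ∈ closedBall γ rγ)] :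
    ((φ - C w).roots.filter (· ∈ closedBall ω rω)).card = 2 ∧
      ((φ - C w).roots.filter (· ∈ closedBall γ rγ)).card = 1 := by
  have ha : a ≠ 0 := by rintro rfl; simp at hR hrω; linarith
  have hrγt : rγ < ‖ω - γ‖ := lt_of_mul_sq_mul_eq' (norm_nonneg a) hrγ hR
  have hroots := fun z => mem_union_of_mem_roots_sub_C (z := z) hφ hv hR hrω₀ hrω hrγ hw
  obtain ⟨hpdeg, hplc⟩ := natDegree_eq_three_and_leadingCoeff_eq (sub_C_eq_C_mul_add_C hφ w) ha
  have hcard : ((φ - C w).roots.filter (· ∈ closedBall ω rω)).card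
      + ((φ - C w).roots.filter (· ∉ closedBall ω rω)).card = 2 + 1 := by
    rw [← Multiset.card_add, Multiset.filter_add_not,
      splits_iff_card_roots.mp (IsAlgClosed.splits _), hpdeg]
  -- Evaluate at a point `x` of the annulus `rω < ‖x - ω‖ < ‖ω - γ‖`: the roots in the first ball
  -- are at distance `‖x - ω‖` from it, the others at distance `‖ω - γ‖`.
  obtain ⟨e, he₁, he₂⟩ := hgap
  have hxγ : ‖ω + e - γ‖ = ‖ω - γ‖ := norm_sub_eq_of_norm_sub_lt (by rwa [add_sub_cancel_left])
  have hnorm := norm_eval_eq_of_forall_mem_roots (φ - C w) (· ∈ closedBall ω rω) (x := ω + e)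
    (s := ‖e‖) (t := ‖ω - γ‖)
    (fun z _ hz => by
      rw [mem_closedBall, dist_eq_norm, norm_sub_rev] at hz
      rw [norm_sub_eq_of_lt_norm_sub (x := ω) (by rw [add_sub_cancel_left]; linarith),
        add_sub_cancel_left])
    (fun z hz hz' => by
      have hzγ := (hroots z hz).resolve_left hz'
      rw [mem_closedBall, dist_eq_norm, norm_sub_rev] at hzγ
      rw [norm_sub_eq_of_lt_norm_sub (hzγ.trans_lt (hxγ ▸ hrγt)), hxγ])
  rw [hplc, norm_eval_sub_C_add_eq hφ ha hv hrω₀ hrω hw he₁ he₂] at hnorm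
  have hk := eq_of_pow_mul_pow_eq (hrω₀.trans_lt he₁) he₂ hcard
    (by rw [pow_one]; exact (mul_left_cancel₀ (norm_ne_zero_iff.mpr ha) hnorm).symm)
  refine ⟨hk, ?_⟩
  have hγω : ∀ z ∈ closedBall γ rγ, z ∉ closedBall ω rω := fun z hz hz' => by
    rw [mem_closedBall, dist_eq_norm] at hz hz'
    rw [norm_sub_eq_of_norm_sub_lt (hz.trans_lt (norm_sub_rev ω γ ▸ hrγt)), norm_sub_rev] at hz'
    exact (lt_of_mul_sq_mul_eq (norm_nonneg a) (norm_nonneg _) hrω hR).not_ge hz'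
  rw [Multiset.filter_congr fun z hz => ⟨hγω z, (hroots z hz).resolve_left⟩]
  omega

lemma hasDegOn_closedBall (hφ : φ = C a * ((X - C ω) ^ 2 * (X - C γ)) + C v)
    (hv : ‖v‖ ≤ R) (hR : R < ‖a‖ * ‖ω - γ‖ ^ 3) (hrω₀ : 0 ≤ rω)
    (hrω : ‖a‖ * (rω ^ 2 * ‖ω - γ‖) = R) (hrγ : ‖a‖ * (‖ω - γ‖ ^ 2 * rγ) = R)
    (hgap : ∃ e : L, rω < ‖e‖ ∧ ‖e‖ < ‖ω - γ‖) :
    HasDegOn φ (closedBall ω rω) (closedBall 0 R) 2 ∧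
      HasDegOn φ (closedBall γ rγ) (closedBall 0 R) 1 := by
  classical
  have ha : a ≠ 0 := by rintro rfl; simp at hR hrω; linarith
  have hsubC : ∀ w, φ - C w ≠ 0 := fun w h => by
    simpa [h] using (natDegree_eq_three_and_leadingCoeff_eq (sub_C_eq_C_mul_add_C hφ w) ha).1
  have hcard := fun w (hw : w ∈ closedBall (0 : L) R) => card_filter_roots_mem_closedBall hφ hv
    hR hrω₀ hrω hrγ hgap (mem_closedBall_zero_iff.mp hw)
  refine ⟨⟨one_le_two, fun w hw => ?_⟩, ⟨le_rfl, fun w hw => ?_⟩⟩ <;>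
    rw [finsum_localDeg_eq_card_filter_roots (hsubC w)]
  exacts [(hcard w hw).1, (hcard w hw).2]

end CubicRootCount

lemma exists_norm_mem_Ioo {L : Type*} [NormedField L]
    (hdense : ∀ r : ℝ, 0 < r → ∀ ε : ℝ, 0 < ε → ∃ x : L, x ≠ 0 ∧ |‖x‖ - r| < ε) {r s : ℝ}
    (hr : 0 ≤ r) (hrs : r < s) : ∃ e : L, r < ‖e‖ ∧ ‖e‖ < s := by
  obtain ⟨x, -, hx⟩ := hdense ((r + s) / 2) (by linarith) ((s - r) / 2) (by linarith)
  rw [abs_lt] at hx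
  exact ⟨x, by linarith [hx.1], by linarith [hx.2]⟩

theorem cubic_level_one_structure_general {L : Type*} [NormedField L] [IsUltrametricDist L] [IsAlgClosed L]
    (hdense : ∀ r : ℝ, 0 < r → ∀ ε : ℝ, 0 < ε → ∃ x : L, x ≠ 0 ∧ |‖x‖ - r| < ε)
    (hres : ∀ q : ℚ, q ≠ 0 → ‖(q : L)‖ = 1)
    (φ : Polynomial L) (h3 : φ.natDegree = 3)
    (ωp ωm γp : L) (hne : ωp ≠ ωm)
    (hcp : (Polynomial.derivative φ).eval ωp = 0)
    (hcm : (Polynomial.derivative φ).eval ωm = 0)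
    (hnorm : escapeRadius φ = Metric.diam (filledJulia φ))
    (hvp : φ.eval ωp ∈ Metric.closedBall (0 : L) (escapeRadius φ))
    (hesc : ωm ∉ filledJulia φ)
    (hγ : φ.eval γp = φ.eval ωp) (hγne : γp ≠ ωp) :
    φ.eval ωm ∉ Metric.closedBall (0 : L) (escapeRadius φ) ∧
    ∃ Bω Bγ : Set L,
      IsDynBall φ 1 Bω ∧ ωp ∈ Bω ∧ IsDynBall φ 1 Bγ ∧ γp ∈ Bγ ∧ Bω ≠ Bγ ∧
      (∀ B, IsDynBall φ 1 B → B = Bω ∨ B = Bγ) ∧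
      HasDegOn φ Bω (Metric.closedBall (0 : L) (escapeRadius φ)) 2 ∧
      HasDegOn φ Bγ (Metric.closedBall (0 : L) (escapeRadius φ)) 1 := by
  have hφ := eq_C_mul_X_sub_C_sq_mul_X_sub_C_add_C h3 hcp hγ hγne
  set R := escapeRadius φ
  set a := φ.leadingCoeff
  set t := ‖ωp - γp‖
  have hv : ‖φ.eval ωp‖ ≤ R := mem_closedBall_zero_iff.mp hvp
  have ha : a ≠ 0 := leadingCoeff_ne_zero.mpr (ne_zero_of_natDegree_gt (h3 ▸ three_pos))
  obtain ⟨hmω, hmγ⟩ := norm_sub_eq_of_three_mul_eq (by simpa using hres 2 two_ne_zero)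
    (by simpa using hres 3 three_ne_zero)
    (three_mul_eq_of_derivative_eval_eq_zero hφ ha hcm hne.symm)
  have hR : R < ‖a‖ * t ^ 3 := escapeRadius_lt_of_diam_filledJulia_eq h3 hφ hv hnorm hmω.le hesc
  have hR₀ : 0 < R := escapeRadius_pos (ne_zero_of_natDegree_gt (h3 ▸ three_pos))
  have ha₀ : 0 < ‖a‖ := norm_pos_iff.mpr ha
  have ht : 0 < t := norm_pos_iff.mpr (sub_ne_zero.mpr hγne.symm)
  obtain ⟨rω, hrω₀, hrω⟩ : ∃ r : ℝ, 0 < r ∧ ‖a‖ * (r ^ 2 * t) = R :=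
    ⟨√(R / (‖a‖ * t)), by positivity, by rw [Real.sq_sqrt (by positivity)]; field_simp⟩
  obtain ⟨rγ, hrγ₀, hrγ⟩ : ∃ r : ℝ, 0 < r ∧ ‖a‖ * (t ^ 2 * r) = R :=
    ⟨R / (‖a‖ * t ^ 2), by positivity, by field_simp⟩
  have hgapω := exists_norm_mem_Ioo hdense hrω₀.le (lt_of_mul_sq_mul_eq ha₀.le ht.le hrω hR)
  have hrγt := lt_of_mul_sq_mul_eq' ha₀.le hrγ hR
  have hgapγ := exists_norm_mem_Ioo hdense hrγ₀.le hrγt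
  have hdyn := fun B => isDynBall_one_iff (B := B) hφ hv hR hrω₀ hrγ₀ hrω hrγ hgapω hgapγ
  obtain ⟨hdegω, hdegγ⟩ := hasDegOn_closedBall hφ hv hR hrω₀.le hrω hrγ hgapω
  refine ⟨?_, closedBall ωp rω, closedBall γp rγ, (hdyn _).mpr (.inl rfl),
    mem_closedBall_self hrω₀.le, (hdyn _).mpr (.inr rfl), mem_closedBall_self hrγ₀.le, ?_,
    fun B hB => (hdyn B).mp hB, hdegω, hdegγ⟩
  · rwa [mem_closedBall_zero_iff, norm_eval_le_iff hφ hv, hmω, hmγ, not_le, ← pow_succ]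
  · intro h
    have hωp : ωp ∈ closedBall γp rγ := h ▸ mem_closedBall_self hrω₀.le
    rw [mem_closedBall, dist_eq_norm] at hωp
    exact hrγt.not_ge hωp

/-- **Level-1 structure for cubics.** For a cubic with `R_φ = diam K(φ)`,
`φ(ω⁺) ∈ D₀` and `ω⁻ ∉ K(φ)`: `φ(ω⁻) ∉ D₀`; there are exactly two level-1 balls,
containing `ω⁺` and the cocritical point `γ⁺` respectively, and `φ` has degree 2 on
the former and degree 1 on the latter, onto `D₀`. -/
theorem cubic_level_one_structure {L : Type*} [NormedField L] [IsUltrametricDist L] [CompleteSpace L] [IsAlgClosed L]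
    (hdense : ∀ r : ℝ, 0 < r → ∀ ε : ℝ, 0 < ε → ∃ x : L, x ≠ 0 ∧ |‖x‖ - r| < ε)
    (hres : ∀ q : ℚ, q ≠ 0 → ‖(q : L)‖ = 1)
    (φ : Polynomial L) (h3 : φ.natDegree = 3)
    (ωp ωm γp : L) (hne : ωp ≠ ωm)
    (hcp : (Polynomial.derivative φ).eval ωp = 0)
    (hcm : (Polynomial.derivative φ).eval ωm = 0)
    (hnorm : escapeRadius φ = Metric.diam (filledJulia φ))
    (hvp : φ.eval ωp ∈ Metric.closedBall (0 : L) (escapeRadius φ))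
    (hesc : ωm ∉ filledJulia φ)
    (hγ : φ.eval γp = φ.eval ωp) (hγne : γp ≠ ωp) :
    φ.eval ωm ∉ Metric.closedBall (0 : L) (escapeRadius φ) ∧
    ∃ Bω Bγ : Set L,
      IsDynBall φ 1 Bω ∧ ωp ∈ Bω ∧ IsDynBall φ 1 Bγ ∧ γp ∈ Bγ ∧ Bω ≠ Bγ ∧
      (∀ B, IsDynBall φ 1 B → B = Bω ∨ B = Bγ) ∧
      HasDegOn φ Bω (Metric.closedBall (0 : L) (escapeRadius φ)) 2 ∧
      HasDegOn φ Bγ (Metric.closedBall (0 : L) (escapeRadius φ)) 1 :=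
  cubic_level_one_structure_general hdense hres φ h3 ωp ωm γp hne hcp hcm hnorm hvp hesc hγ hγne
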